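/- Suppose a Markov kernel P satisfies the polynomial drift condition: PV(x) ≤ V(x) − (1−λ)V(x)^α for x ∉ J and PV(x) ≤ K for x ∈ J, with V: X → [1,∞), λ < 1, 0 < α ≤ 1, K < ∞. Then for every η ≤ 1: PV^η(x) ≤ V^η(x) − η(1−λ)V(x)^{η+α−1} for x ∉ J, and PV^η(x) ≤ K^η for x ∈ J. -/

import Mathlib

/-!
Since `t ↦ t ^ η` is concave for `0 ≤ η ≤ 1`, it lies below its tangent line at any
`u > 0`: `t ^ η ≤ (1 - η) u ^ η + η u ^ (η - 1) t`. The right-hand side is affine in `t`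
with nonnegative coefficients, so integrating against `P x` and inserting the drift bound
for `PV` bounds `PV ^ η`; the tangent point is `u = V x` off `J` and `u = K` on `J`.
-/

open MeasureTheory ProbabilityTheory ENNReal

theorem Real.rpow_le_tangent_line {u t η : ℝ} (hu : 0 < u) (ht : 0 ≤ t) (hη0 : 0 ≤ η)
    (hη1 : η ≤ 1) : t ^ η ≤ (1 - η) * u ^ η + η * u ^ (η - 1) * t := by
  have hbern := rpow_one_add_le_one_add_mul_self
    (show -1 ≤ t / u - 1 by linarith [div_nonneg ht hu.le]) hη0 hη1
  rw [add_sub_cancel, Real.div_rpow ht hu.le, div_le_iff₀ (Real.rpow_pos_of_pos hu η)] at hbern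
  calc t ^ η ≤ (1 + η * (t / u - 1)) * u ^ η := hbern
    _ = (1 - η) * u ^ η + η * u ^ (η - 1) * t := by
      rw [Real.rpow_sub_one hu.ne']
      field_simp
      ring

section ProbabilityMeasure

variable {α : Type*} [MeasurableSpace α] {μ : Measure α} [IsProbabilityMeasure μ] {f : α → ℝ}

theorem one_le_of_lintegral_ofReal_le (hf : ∀ y, 1 ≤ f y)
    {b : ℝ} (hfb : ∫⁻ y, ENNReal.ofReal (f y) ∂μ ≤ ENNReal.ofReal b) : 1 ≤ b := by
  refine ENNReal.one_le_ofReal.mp (le_trans ?_ hfb)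
  calc (1 : ℝ≥0∞) = ∫⁻ _, 1 ∂μ := by simp
    _ ≤ ∫⁻ y, ENNReal.ofReal (f y) ∂μ :=
      lintegral_mono fun y => by simpa using ENNReal.ofReal_le_ofReal (hf y)

theorem lintegral_ofReal_rpow_le_of_lintegral_ofReal_le (hf : ∀ y, 0 ≤ f y) {u b η : ℝ}
    (hu : 0 < u) (hb : 0 ≤ b) (hη0 : 0 ≤ η) (hη1 : η ≤ 1)
    (hfb : ∫⁻ y, ENNReal.ofReal (f y) ∂μ ≤ ENNReal.ofReal b) :
    ∫⁻ y, ENNReal.ofReal (f y ^ η) ∂μ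
      ≤ ENNReal.ofReal ((1 - η) * u ^ η + η * u ^ (η - 1) * b) := by
  have hA : 0 ≤ (1 - η) * u ^ η := mul_nonneg (sub_nonneg.2 hη1) (Real.rpow_nonneg hu.le η)
  have hD : 0 ≤ η * u ^ (η - 1) := mul_nonneg hη0 (Real.rpow_nonneg hu.le _)
  calc ∫⁻ y, ENNReal.ofReal (f y ^ η) ∂μ
      ≤ ∫⁻ y, ENNReal.ofReal ((1 - η) * u ^ η)
          + ENNReal.ofReal (η * u ^ (η - 1)) * ENNReal.ofReal (f y) ∂μ :=
        lintegral_mono fun y => by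
          rw [← ENNReal.ofReal_mul hD, ← ENNReal.ofReal_add hA (mul_nonneg hD (hf y))]
          exact ENNReal.ofReal_le_ofReal (Real.rpow_le_tangent_line hu (hf y) hη0 hη1)
    _ = ENNReal.ofReal ((1 - η) * u ^ η)
          + ENNReal.ofReal (η * u ^ (η - 1)) * ∫⁻ y, ENNReal.ofReal (f y) ∂μ := by
        rw [lintegral_add_left measurable_const, lintegral_const_mul' _ _ ENNReal.ofReal_ne_top,
          lintegral_const, measure_univ, mul_one]
    _ ≤ ENNReal.ofReal ((1 - η) * u ^ η)
          + ENNReal.ofReal (η * u ^ (η - 1)) * ENNReal.ofReal b := by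
        gcongr
    _ = ENNReal.ofReal ((1 - η) * u ^ η + η * u ^ (η - 1) * b) := by
        rw [← ENNReal.ofReal_mul hD, ← ENNReal.ofReal_add hA (mul_nonneg hD hb)]

end ProbabilityMeasure

theorem polynomial_drift_rpow {𝓧 : Type*} [MeasurableSpace 𝓧] (P : Kernel 𝓧 𝓧)
    [IsMarkovKernel P] (V : 𝓧 → ℝ) (hV1 : ∀ x, 1 ≤ V x)
    (J : Set 𝓧) (lam K α : ℝ)
    (hdrift_out : ∀ x ∉ J,
      ∫⁻ y, ENNReal.ofReal (V y) ∂(P x)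
        ≤ ENNReal.ofReal (V x - (1 - lam) * V x ^ α))
    (hdrift_in : ∀ x ∈ J,
      ∫⁻ y, ENNReal.ofReal (V y) ∂(P x) ≤ ENNReal.ofReal K)
    (η : ℝ) (hη0 : 0 < η) (hη1 : η ≤ 1) :
    (∀ x ∉ J, ∫⁻ y, ENNReal.ofReal (V y ^ η) ∂(P x)
        ≤ ENNReal.ofReal (V x ^ η - η * (1 - lam) * V x ^ (η + α - 1)))
    ∧ (∀ x ∈ J, ∫⁻ y, ENNReal.ofReal (V y ^ η) ∂(P x)
        ≤ ENNReal.ofReal (K ^ η)) := by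
  have hV0 : ∀ y, 0 ≤ V y := fun y => zero_le_one.trans (hV1 y)
  refine ⟨fun x hx => ?_, fun x hx => ?_⟩
  · have hb := one_le_of_lintegral_ofReal_le hV1 (hdrift_out x hx)
    have hu : 0 < V x := zero_lt_one.trans_le (hV1 x)
    convert lintegral_ofReal_rpow_le_of_lintegral_ofReal_le hV0 hu (by linarith) hη0.le hη1
      (hdrift_out x hx) using 2
    rw [show η + α - 1 = η - 1 + α by ring, Real.rpow_add hu, Real.rpow_sub_one hu.ne']
    field_simp
    ring
  · have hK : 0 < K := zero_lt_one.trans_le (one_le_of_lintegral_ofReal_le hV1 (hdrift_in x hx))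
    convert lintegral_ofReal_rpow_le_of_lintegral_ofReal_le hV0 hK hK.le hη0.le hη1
      (hdrift_in x hx) using 2
    rw [Real.rpow_sub_one hK.ne']
    field_simp
    ring
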